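/- The reduction axiom AASSI is valid: if z does not occur in [!ψ][x:=t]φ, then for all models M, worlds w, assignments σ: M,w,σ ⊨ [!ψ][x:=t]φ ↔ [z:=x][x:=t][!ψ[z/x]]φ. -/
import Mathlib


inductive Term (V N : Type) where
  | var : V → Term V N
  | name : N → Term V N

/-- Formulas of public announcement logic with assignments. -/
inductive PForm (V N P I : Type) where
  | eq : Term V N → Term V N → PForm V N P I
  | pred : P → List (Term V N) → PForm V N P I
  | neg : PForm V N P I → PForm V N P I
  | and : PForm V N P I → PForm V N P I → PForm V N P I
  | K : I → PForm V N P I → PForm V N P I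
  | assign : V → Term V N → PForm V N P I → PForm V N P I
  | ann : PForm V N P I → PForm V N P I → PForm V N P I

structure Model (W D N P I : Type) where
  R : I → W → W → Prop
  ρ : P → W → List D → Prop
  η : N → W → D

variable {V N P I D : Type}

def tval {W : Type} (M : Model W D N P I) (σ : V → D) (w : W) : Term V N → D
  | .var x => σ x
  | .name a => M.η a w

/-- The submodel of M restricted to a set of worlds: relations and
interpretations are restricted. -/
def Model.restrict {W : Type} (M : Model W D N P I) (s : Set W) :
    Model s D N P I where
  R i v v' := M.R i v.1 v'.1
  ρ p v := M.ρ p v.1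
  η a v := M.η a v.1

/-- Satisfaction for PAL with assignments; [!ψ]φ is evaluated in the
submodel restricted to the ψ-worlds. -/
def Sat [DecidableEq V] : {W : Type} → Model W D N P I → W → (V → D) →
    PForm V N P I → Prop
  | _, M, w, σ, .eq t t' => tval M σ w t = tval M σ w t'
  | _, M, w, σ, .pred p ts => M.ρ p w (ts.map (tval M σ w))
  | _, M, w, σ, .neg φ => ¬ Sat M w σ φ
  | _, M, w, σ, .and φ ψ => Sat M w σ φ ∧ Sat M w σ ψ
  | _, M, w, σ, .K i φ => ∀ v, M.R i w v → Sat M v σ φ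
  | _, M, w, σ, .assign x t φ => Sat M w (Function.update σ x (tval M σ w t)) φ
  | _, M, w, σ, .ann ψ φ =>
      ∀ h : Sat M w σ ψ, Sat (M.restrict {v | Sat M v σ ψ}) ⟨w, h⟩ σ φ

def Term.vars : Term V N → Set V
  | .var x => {x}
  | .name _ => ∅

/-- All variables occurring in a formula (free, bound, or as a binder). -/
def PForm.vars : PForm V N P I → Set V
  | .eq t t' => t.vars ∪ t'.vars
  | .pred _ ts => ⋃ t ∈ ts, Term.vars t
  | .neg φ => φ.vars
  | .and φ ψ => φ.vars ∪ ψ.vars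
  | .K _ φ => φ.vars
  | .assign x t φ => {x} ∪ t.vars ∪ φ.vars
  | .ann ψ φ => ψ.vars ∪ φ.vars

def Term.substV [DecidableEq V] (y x : V) : Term V N → Term V N
  | .var z => if z = x then .var y else .var z
  | .name a => .name a

/-- φ[y/x]: substitute y for all free occurrences of x in φ. -/
def PForm.substV [DecidableEq V] (y x : V) : PForm V N P I → PForm V N P I
  | .eq t t' => .eq (t.substV y x) (t'.substV y x)
  | .pred p ts => .pred p (ts.map (Term.substV y x))
  | .neg φ => .neg (φ.substV y x)
  | .and φ ψ => .and (φ.substV y x) (ψ.substV y x)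
  | .K i φ => .K i (φ.substV y x)
  | .assign z t φ =>
      .assign z (t.substV y x) (if z = x then φ else φ.substV y x)
  | .ann ψ φ => .ann (ψ.substV y x) (φ.substV y x)

lemma tval_agree {W : Type} (M : Model W D N P I) (w : W) (σ σ' : V → D)
    (t : Term V N) (h : ∀ y ∈ t.vars, σ y = σ' y) :
    tval M σ w t = tval M σ' w t := by
  cases t with
  | var y => exact h y rfl
  | name a => rfl

lemma tval_restrict {W : Type} (M : Model W D N P I) (s : Set W) (σ : V → D)
    (v : s) (t : Term V N) : tval (M.restrict s) σ v t = tval M σ v.1 t := by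
  cases t <;> rfl

lemma tval_substV [DecidableEq V] {W : Type} (M : Model W D N P I) (w : W)
    (σ : V → D) (z x : V) (t : Term V N) :
    tval M σ w (t.substV z x) = tval M (Function.update σ x (σ z)) w t := by
  cases t with
  | var y =>
    by_cases h : y = x <;> simp [Term.substV, tval, h, Function.update]
  | name a => rfl

lemma sat_cast [DecidableEq V] {W : Type} (M : Model W D N P I)
    {s s' : Set W} (hss : s = s') {w : W} (hw : w ∈ s) (hw' : w ∈ s')
    (σ : V → D) (φ : PForm V N P I) :
    Sat (M.restrict s) ⟨w, hw⟩ σ φ ↔ Sat (M.restrict s') ⟨w, hw'⟩ σ φ := by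
  subst hss; rfl

lemma sat_agree [DecidableEq V] (φ : PForm V N P I) :
    ∀ {W : Type} (M : Model W D N P I) (w : W) (σ σ' : V → D),
      (∀ y ∈ φ.vars, σ y = σ' y) → (Sat M w σ φ ↔ Sat M w σ' φ) := by
  induction φ with
  | eq t t' =>
    intro W M w σ σ' h
    simp only [Sat]
    rw [tval_agree M w σ σ' t (fun y hy => h y (Or.inl hy)),
        tval_agree M w σ σ' t' (fun y hy => h y (Or.inr hy))]
  | pred p ts =>
    intro W M w σ σ' h
    simp only [Sat]
    have : ts.map (tval M σ w) = ts.map (tval M σ' w) := by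
      apply List.map_congr_left
      intro a ha
      exact tval_agree M w σ σ' a (fun y hy => h y (by
        simp [PForm.vars]; exact ⟨a, ha, hy⟩))
    rw [this]
  | neg φ ih =>
    intro W M w σ σ' h
    simp only [Sat]
    rw [ih M w σ σ' h]
  | and φ ψ ihφ ihψ =>
    intro W M w σ σ' h
    simp only [Sat]
    rw [ihφ M w σ σ' (fun y hy => h y (Or.inl hy)),
        ihψ M w σ σ' (fun y hy => h y (Or.inr hy))]
  | K i φ ih =>
    intro W M w σ σ' h
    simp only [Sat]
    exact forall_congr' fun v => imp_congr_right fun _ => ih M v σ σ' h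
  | assign y s φ ih =>
    intro W M w σ σ' h
    simp only [Sat]
    have hs : tval M σ w s = tval M σ' w s :=
      tval_agree M w σ σ' s (fun u hu => h u (Or.inl (Or.inr hu)))
    rw [hs]
    apply ih
    intro u hu
    by_cases hux : u = y
    · subst hux; simp
    · simp [Function.update, hux]
      exact h u (Or.inr hu)
  | ann ψ φ ihψ ihφ =>
    intro W M w σ σ' h
    simp only [Sat]
    have hm : ∀ v, Sat M v σ ψ ↔ Sat M v σ' ψ :=
      fun v => ihψ M v σ σ' (fun y hy => h y (Or.inl hy))
    have hset : {v | Sat M v σ ψ} = {v | Sat M v σ' ψ} := Set.ext hm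
    have hφag : ∀ y ∈ φ.vars, σ y = σ' y := fun y hy => h y (Or.inr hy)
    constructor
    · intro H h'
      exact (ihφ _ _ σ σ' hφag).mp
        ((sat_cast M hset ((hm w).mpr h') h' σ φ).mp (H ((hm w).mpr h')))
    · intro H h
      exact ((ihφ (M.restrict {v | Sat M v σ ψ}) ⟨w, h⟩ σ σ' hφag).trans
        ((sat_cast M hset h ((hm w).mp h) σ' φ))).mpr (H ((hm w).mp h))

lemma sat_substV [DecidableEq V] (φ : PForm V N P I) (z x : V)
    (hz : z ∉ φ.vars) :
    ∀ {W : Type} (M : Model W D N P I) (w : W) (σ : V → D),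
      Sat M w σ (φ.substV z x) ↔ Sat M w (Function.update σ x (σ z)) φ := by
  induction φ with
  | eq t t' =>
    intro W M w σ
    simp only [PForm.substV, Sat, tval_substV]
  | pred p ts =>
    intro W M w σ
    simp only [PForm.substV, Sat, List.map_map]
    have : (tval M σ w ∘ Term.substV z x) =
        tval M (Function.update σ x (σ z)) w := by
      funext a; exact tval_substV M w σ z x a
    rw [this]
  | neg φ ih =>
    intro W M w σ
    simp only [PForm.substV, Sat]
    rw [ih hz]
  | and φ ψ ihφ ihψ =>
    intro W M w σ
    simp only [PForm.substV, Sat]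
    rw [ihφ (fun hh => hz (Or.inl hh)), ihψ (fun hh => hz (Or.inr hh))]
  | K i φ ih =>
    intro W M w σ
    simp only [PForm.substV, Sat]
    exact forall_congr' fun v => imp_congr_right fun _ => ih hz M v σ
  | assign y s φ ih =>
    intro W M w σ
    have hzy : z ≠ y := fun hh => hz (Or.inl (Or.inl hh))
    have hzs : z ∉ s.vars := fun hh => hz (Or.inl (Or.inr hh))
    have hzφ : z ∉ φ.vars := fun hh => hz (Or.inr hh)
    simp only [PForm.substV, Sat]
    rw [tval_substV]
    set d := tval M (Function.update σ x (σ z)) w s with hd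
    by_cases hyx : y = x
    · rw [if_pos hyx]
      subst hyx
      rw [Function.update_idem]
    · rw [if_neg hyx]
      rw [ih hzφ]
      apply sat_agree
      intro u hu
      have huz : (Function.update σ y d) z = σ z := by
        simp [Function.update, hzy]
      rw [huz]
      by_cases hux : u = x
      · subst hux; simp [Function.update, hyx, Ne.symm hyx]
      · by_cases huy : u = y
        · subst huy; simp [Function.update, hyx, hux]
        · simp [Function.update, hux, huy]
  | ann ψ φ ihψ ihφ =>
    intro W M w σ
    have hzψ : z ∉ ψ.vars := fun hh => hz (Or.inl hh)
    have hzφ : z ∉ φ.vars := fun hh => hz (Or.inr hh)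
    simp only [PForm.substV, Sat]
    have hm : ∀ v, Sat M v σ (ψ.substV z x) ↔
        Sat M v (Function.update σ x (σ z)) ψ := fun v => ihψ hzψ M v σ
    have hset : {v | Sat M v σ (ψ.substV z x)} =
        {v | Sat M v (Function.update σ x (σ z)) ψ} := Set.ext hm
    constructor
    · intro H h'
      exact (ihφ hzφ _ _ σ).mp
        ((sat_cast M hset ((hm w).mpr h') h' σ _).mp (H ((hm w).mpr h')))
    · intro H h
      exact ((ihφ hzφ (M.restrict {v | Sat M v σ (PForm.substV z x ψ)}) ⟨w, h⟩ σ).trans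
        ((sat_cast M hset h ((hm w).mp h) _ φ))).mpr (H ((hm w).mp h))

/-- Reduction axiom AASSI: if z does not occur in [!ψ][x:=t]φ, then
[!ψ][x:=t]φ ↔ [z:=x][x:=t][!ψ[z/x]]φ. -/
theorem aassi_valid [DecidableEq V] {W : Type} (M : Model W D N P I)
    (w : W) (σ : V → D) (x z : V) (t : Term V N) (ψ φ : PForm V N P I)
    (hz : z ∉ PForm.vars (.ann ψ (.assign x t φ))) :
    Sat M w σ (.ann ψ (.assign x t φ)) ↔
      Sat M w σ (.assign z (.var x) (.assign x t (.ann (ψ.substV z x) φ))) := by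
  have hzψ : z ∉ ψ.vars := fun hh => hz (Or.inl hh)
  have hzx : z ≠ x := fun hh => hz (Or.inr (Or.inl (Or.inl hh)))
  have hzt : z ∉ t.vars := fun hh => hz (Or.inr (Or.inl (Or.inr hh)))
  have hzφ : z ∉ φ.vars := fun hh => hz (Or.inr (Or.inr hh))
  simp only [Sat]
  set σ1 := Function.update σ z (tval M σ w (Term.var x)) with hσ1
  have hσ1x : tval M σ w (Term.var x) = σ x := rfl
  have ht1 : tval M σ1 w t = tval M σ w t := by
    apply tval_agree
    intro y hy
    have hyz : y ≠ z := fun hh => hzt (hh ▸ hy)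
    simp [hσ1, Function.update, hyz]
  rw [ht1]
  set d := tval M σ w t with hd
  set σ2 := Function.update σ1 x d with hσ2
  have hσ2z : σ2 z = σ x := by
    simp [hσ2, hσ1, Function.update, hzx, hσ1x]
  have hψiff : ∀ v, Sat M v σ2 (ψ.substV z x) ↔ Sat M v σ ψ := by
    intro v
    rw [sat_substV ψ z x hzψ M v σ2]
    apply sat_agree
    intro y hy
    have hyz : y ≠ z := fun hh => hzψ (hh ▸ hy)
    by_cases hyx : y = x
    · subst hyx; simp [hσ2z]
    · simp [Function.update, hyx, hσ2, hσ1, hyz]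
  have hset : {v | Sat M v σ2 (ψ.substV z x)} = {v | Sat M v σ ψ} :=
    Set.ext hψiff
  have hag : ∀ y ∈ φ.vars, (Function.update σ x d) y = σ2 y := by
    intro y hy
    have hyz : y ≠ z := fun hh => hzφ (hh ▸ hy)
    by_cases hyx : y = x
    · subst hyx; simp [hσ2, Function.update]
    · simp [Function.update, hyx, hσ2, hσ1, hyz]
  constructor
  · intro H h'
    have h : Sat M w σ ψ := (hψiff w).mp h'
    have h1 := H h
    rw [tval_restrict, ← hd] at h1
    exact (sat_cast M hset.symm h h' σ2 φ).mp ((sat_agree φ _ _ _ σ2 hag).mp h1)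
  · intro H h
    have h' : Sat M w σ2 (ψ.substV z x) := (hψiff w).mpr h
    have h1 := (sat_cast M hset h' h σ2 φ).mp (H h')
    rw [tval_restrict, ← hd]
    exact (sat_agree φ _ _ _ σ2 hag).mpr h1
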